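/- Define L(k1,k2,k3,k4,k5) = 2·q(k1, k2, k1-k2+k3-k4+k5)·q(k3, k4, k5)·Φ0(k3, k4, k1-k2+k5), where q(a,b,d) = λ2·a·d - (λ3/2)·(a+d)·b + λ4·b^2 + (λ5/2)·(a^2+d^2) for real constants λ2, λ3, λ4, λ5, and Φ0(a,b,d) = (a-b+d)^4 - a^4 + b^4 - d^4. Then, viewing L(k1,k2,k3,k4,k5) + L(k3,k4,k1,k2,k5) as a polynomial in k5 with coefficients polynomial in k1,k2,k3,k4, its coefficient of k5^7 equals 2·λ5^2·(k1-k2+k3-k4); in particular, if k1-k2+k3-k4 = 0 then L(k1,k2,k3,k4,k5) + L(k3,k4,k1,k2,k5) is a polynomial of degree at most 6 in k5. -/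
import Mathlib

/-- The symbol of the cubic derivative nonlinearity. -/
noncomputable def qm (l2 l3 l4 l5 a b d : ℝ) : ℝ :=
  l2 * a * d - l3 / 2 * (a + d) * b + l4 * b ^ 2 + l5 / 2 * (a ^ 2 + d ^ 2)

/-- The cubic resonance function of the symbol `k^4`. -/
noncomputable def Phi0 (a b d : ℝ) : ℝ := (a - b + d) ^ 4 - a ^ 4 + b ^ 4 - d ^ 4

noncomputable def Lfun (l2 l3 l4 l5 k1 k2 k3 k4 k5 : ℝ) : ℝ :=
  2 * qm l2 l3 l4 l5 k1 k2 (k1 - k2 + k3 - k4 + k5) * qm l2 l3 l4 l5 k3 k4 k5 *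
    Phi0 k3 k4 (k1 - k2 + k5)

/-- Generic expansion of a (2)·(quadratic)·(quadratic)·(cubic) product in `k5`. -/
lemma prod_expand (c0 c1 c2 d0 d1 d2 e0 e1 e2 e3 : ℝ) : ∃ b : Fin 7 → ℝ, ∀ k5 : ℝ,
    2 * (c0 + c1 * k5 + c2 * k5 ^ 2) * (d0 + d1 * k5 + d2 * k5 ^ 2) *
        (e0 + e1 * k5 + e2 * k5 ^ 2 + e3 * k5 ^ 3) =
      2 * (c2 * d2 * e3) * k5 ^ 7 + ∑ i : Fin 7, b i * k5 ^ (i : ℕ) := by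
  refine ⟨![2*(c0*d0*e0),
    2*(c0*d0*e1 + c0*d1*e0 + c1*d0*e0),
    2*(c0*d0*e2 + c0*d1*e1 + c0*d2*e0 + c1*d0*e1 + c1*d1*e0 + c2*d0*e0),
    2*(c0*d0*e3 + c0*d1*e2 + c0*d2*e1 + c1*d0*e2 + c1*d1*e1 + c1*d2*e0 + c2*d0*e1 + c2*d1*e0),
    2*(c0*d1*e3 + c0*d2*e2 + c1*d0*e3 + c1*d1*e2 + c1*d2*e1 + c2*d0*e2 + c2*d1*e1 + c2*d2*e0),
    2*(c0*d2*e3 + c1*d1*e3 + c1*d2*e2 + c2*d0*e3 + c2*d1*e2 + c2*d2*e1),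
    2*(c1*d2*e3 + c2*d1*e3 + c2*d2*e2)], fun k5 => ?_⟩
  rw [Fin.sum_univ_seven]
  show _ = 2 * (c2 * d2 * e3) * k5 ^ 7 +
    (2*(c0*d0*e0) * k5 ^ (0:ℕ) +
     2*(c0*d0*e1 + c0*d1*e0 + c1*d0*e0) * k5 ^ (1:ℕ) +
     2*(c0*d0*e2 + c0*d1*e1 + c0*d2*e0 + c1*d0*e1 + c1*d1*e0 + c2*d0*e0) * k5 ^ (2:ℕ) +
     2*(c0*d0*e3 + c0*d1*e2 + c0*d2*e1 + c1*d0*e2 + c1*d1*e1 + c1*d2*e0 + c2*d0*e1 + c2*d1*e0) * k5 ^ (3:ℕ) +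
     2*(c0*d1*e3 + c0*d2*e2 + c1*d0*e3 + c1*d1*e2 + c1*d2*e1 + c2*d0*e2 + c2*d1*e1 + c2*d2*e0) * k5 ^ (4:ℕ) +
     2*(c0*d2*e3 + c1*d1*e3 + c1*d2*e2 + c2*d0*e3 + c2*d1*e2 + c2*d2*e1) * k5 ^ (5:ℕ) +
     2*(c1*d2*e3 + c2*d1*e3 + c2*d2*e2) * k5 ^ (6:ℕ))
  ring

/-- Expansion of a single `Lfun` as a polynomial in `k5`. -/
lemma Lfun_expand (l2 l3 l4 l5 x1 x2 x3 x4 : ℝ) : ∃ b : Fin 7 → ℝ, ∀ k5 : ℝ,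
    Lfun l2 l3 l4 l5 x1 x2 x3 x4 k5 =
      2 * l5 ^ 2 * (x3 - x4) * k5 ^ 7 + ∑ i : Fin 7, b i * k5 ^ (i : ℕ) := by
  obtain ⟨b, hb⟩ := prod_expand
    (l2 * x1 * (x1 - x2 + x3 - x4) - l3 / 2 * (x1 + (x1 - x2 + x3 - x4)) * x2
        + l4 * x2 ^ 2 + l5 / 2 * (x1 ^ 2 + (x1 - x2 + x3 - x4) ^ 2))
    (l2 * x1 - l3 / 2 * x2 + l5 * (x1 - x2 + x3 - x4)) (l5 / 2)
    (-(l3 / 2) * x3 * x4 + l4 * x4 ^ 2 + l5 / 2 * x3 ^ 2)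
    (l2 * x3 - l3 / 2 * x4) (l5 / 2)
    ((x1 - x2 + x3 - x4) ^ 4 - x3 ^ 4 + x4 ^ 4 - (x1 - x2) ^ 4)
    (4 * (x1 - x2 + x3 - x4) ^ 3 - 4 * (x1 - x2) ^ 3)
    (6 * (x1 - x2 + x3 - x4) ^ 2 - 6 * (x1 - x2) ^ 2)
    (4 * (x3 - x4))
  refine ⟨b, fun k5 => ?_⟩
  have hfac : Lfun l2 l3 l4 l5 x1 x2 x3 x4 k5 =
      2 * ((l2 * x1 * (x1 - x2 + x3 - x4) - l3 / 2 * (x1 + (x1 - x2 + x3 - x4)) * x2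
              + l4 * x2 ^ 2 + l5 / 2 * (x1 ^ 2 + (x1 - x2 + x3 - x4) ^ 2))
            + (l2 * x1 - l3 / 2 * x2 + l5 * (x1 - x2 + x3 - x4)) * k5 + l5 / 2 * k5 ^ 2) *
        ((-(l3 / 2) * x3 * x4 + l4 * x4 ^ 2 + l5 / 2 * x3 ^ 2)
            + (l2 * x3 - l3 / 2 * x4) * k5 + l5 / 2 * k5 ^ 2) *
        (((x1 - x2 + x3 - x4) ^ 4 - x3 ^ 4 + x4 ^ 4 - (x1 - x2) ^ 4)
            + (4 * (x1 - x2 + x3 - x4) ^ 3 - 4 * (x1 - x2) ^ 3) * k5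
            + (6 * (x1 - x2 + x3 - x4) ^ 2 - 6 * (x1 - x2) ^ 2) * k5 ^ 2
            + 4 * (x3 - x4) * k5 ^ 3) := by
    unfold Lfun qm Phi0
    ring
  rw [hfac, hb k5]
  ring

theorem stmt_19 (l2 l3 l4 l5 k1 k2 k3 k4 : ℝ) :
    (∃ a : Fin 7 → ℝ, ∀ k5 : ℝ,
        Lfun l2 l3 l4 l5 k1 k2 k3 k4 k5 + Lfun l2 l3 l4 l5 k3 k4 k1 k2 k5 =
          2 * l5 ^ 2 * (k1 - k2 + k3 - k4) * k5 ^ 7 + ∑ i : Fin 7, a i * k5 ^ (i : ℕ)) ∧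
      (k1 - k2 + k3 - k4 = 0 → ∃ a : Fin 7 → ℝ, ∀ k5 : ℝ,
        Lfun l2 l3 l4 l5 k1 k2 k3 k4 k5 + Lfun l2 l3 l4 l5 k3 k4 k1 k2 k5 =
          ∑ i : Fin 7, a i * k5 ^ (i : ℕ)) := by
  obtain ⟨b, hb⟩ := Lfun_expand l2 l3 l4 l5 k1 k2 k3 k4
  obtain ⟨c, hc⟩ := Lfun_expand l2 l3 l4 l5 k3 k4 k1 k2
  have key : ∀ k5 : ℝ,
      Lfun l2 l3 l4 l5 k1 k2 k3 k4 k5 + Lfun l2 l3 l4 l5 k3 k4 k1 k2 k5 =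
        2 * l5 ^ 2 * (k1 - k2 + k3 - k4) * k5 ^ 7 +
          ∑ i : Fin 7, (b i + c i) * k5 ^ (i : ℕ) := by
    intro k5
    rw [hb k5, hc k5]
    simp only [add_mul, Finset.sum_add_distrib]
    ring
  refine ⟨⟨_, key⟩, fun h => ⟨fun i => b i + c i, fun k5 => ?_⟩⟩
  rw [key k5, h]
  ring
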